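/- Let α > 1 and for β > 0 let ρ(β) be the unique positive real with β·Ψ(ρ(β)·β^α) = 1. Then β^{α−1}·ρ(β) → 1 as β → 0⁺; in particular, since α > 1, ρ(β) → +∞ as β → 0⁺. -/

import Mathlib

open MeasureTheory Real Filter Set

/-- `g(u) = ∫₀ᵘ v^α/(1-v) dv`. -/
noncomputable def gfun (α : ℝ) (u : ℝ) : ℝ := ∫ v in (0:ℝ)..u, v ^ α / (1 - v)

/-- `Ψ(x) = ∫₀¹ (1-u)⁻¹ exp(-x g(u)) du`. -/
noncomputable def Psi (α : ℝ) (x : ℝ) : ℝ :=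
  ∫ u in (0:ℝ)..1, (1 - u)⁻¹ * Real.exp (-x * gfun α u)

/-!
Put `h(u) = -log (1 - u) - g(u)`. Since `1 - α (1 - v) ≤ v ^ α` (Bernoulli), `h` takes values in
`[0, α]` on `[0, 1)`, and the integrand of `Ψ(x)` is `(1 - u) ^ (x - 1) * exp (x h(u))`. As
`∫₀¹ (1 - u) ^ (x - 1) du = 1 / x`, this gives `1 / x ≤ Ψ(x) ≤ exp (α x) / x`, so `x Ψ(x) → 1` as
`x → 0⁺`. With `x(β) = ρ(β) β ^ α` we have `Ψ(x(β)) = 1 / β → ∞`; as `Ψ` is antitone this forces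
`x(β) → 0⁺`, and then `β ^ (α - 1) ρ(β) = x(β) Ψ(x(β)) → 1`.
-/

open Topology

section gfun

variable {α : ℝ}

lemma continuousOn_rpow_div_one_sub (hα : 0 ≤ α) :
    ContinuousOn (fun v : ℝ => v ^ α / (1 - v)) (Iio 1) :=
  (continuousOn_id.rpow_const fun _ _ => Or.inr hα).div (continuousOn_const.sub continuousOn_id)
    fun _ hv => (sub_pos.2 hv).ne'

lemma continuousOn_inv_one_sub : ContinuousOn (fun v : ℝ => (1 - v)⁻¹) (Iio 1) :=
  (continuousOn_const.sub continuousOn_id).inv₀ fun _ hv => (sub_pos.2 hv).ne'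

lemma uIcc_zero_subset_Iio_one {u : ℝ} (hu : u < 1) : uIcc 0 u ⊆ Iio (1:ℝ) :=
  fun _ hv => hv.2.trans_lt (max_lt one_pos hu)

lemma intervalIntegrable_rpow_div_one_sub (hα : 0 ≤ α) {u : ℝ} (hu : u < 1) :
    IntervalIntegrable (fun v : ℝ => v ^ α / (1 - v)) volume 0 u :=
  ((continuousOn_rpow_div_one_sub hα).mono (uIcc_zero_subset_Iio_one hu)).intervalIntegrable

lemma intervalIntegrable_inv_one_sub {u : ℝ} (hu : u < 1) :
    IntervalIntegrable (fun v : ℝ => (1 - v)⁻¹) volume 0 u :=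
  (continuousOn_inv_one_sub.mono (uIcc_zero_subset_Iio_one hu)).intervalIntegrable

lemma integral_inv_one_sub {u : ℝ} (hu : u < 1) :
    ∫ v in (0:ℝ)..u, (1 - v)⁻¹ = -log (1 - u) := by
  rw [intervalIntegral.integral_comp_sub_left (fun t => t⁻¹) 1, sub_zero,
    integral_inv_of_pos (sub_pos.2 hu) one_pos, one_div, log_inv]

lemma rpow_div_one_sub_le_inv (hα : 0 ≤ α) {v : ℝ} (hv : v ∈ Icc (0:ℝ) 1) :
    v ^ α / (1 - v) ≤ (1 - v)⁻¹ := by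
  rw [div_eq_mul_inv]
  exact mul_le_of_le_one_left (inv_nonneg.2 (sub_nonneg.2 hv.2)) (rpow_le_one hv.1 hv.2 hα)

lemma inv_one_sub_sub_le_rpow_div (hα : 1 ≤ α) {v : ℝ} (hv : v ∈ Ico (0:ℝ) 1) :
    (1 - v)⁻¹ - α ≤ v ^ α / (1 - v) := by
  have h1v : 0 < 1 - v := sub_pos.2 hv.2
  have bernoulli : 1 - α * (1 - v) ≤ v ^ α := by
    have := one_add_mul_self_le_rpow_one_add (s := v - 1) (by linarith [hv.1]) hα
    rw [add_sub_cancel] at this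
    linarith
  calc (1 - v)⁻¹ - α = (1 - α * (1 - v)) / (1 - v) := by field_simp
    _ ≤ v ^ α / (1 - v) := div_le_div_of_nonneg_right bernoulli h1v.le

lemma gfun_le_neg_log (hα : 0 ≤ α) {u : ℝ} (hu : u ∈ Ico (0:ℝ) 1) :
    gfun α u ≤ -log (1 - u) := by
  rw [← integral_inv_one_sub hu.2]
  refine intervalIntegral.integral_mono_on hu.1 (intervalIntegrable_rpow_div_one_sub hα hu.2)
    (intervalIntegrable_inv_one_sub hu.2) fun _ hv => rpow_div_one_sub_le_inv hα ?_
  exact ⟨hv.1, hv.2.trans hu.2.le⟩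

lemma neg_log_sub_le_gfun (hα : 1 ≤ α) {u : ℝ} (hu : u ∈ Ico (0:ℝ) 1) :
    -log (1 - u) - α ≤ gfun α u := calc
  -log (1 - u) - α ≤ -log (1 - u) - α * u := by nlinarith [hu.2]
  _ = ∫ v in (0:ℝ)..u, ((1 - v)⁻¹ - α) := by
    rw [intervalIntegral.integral_sub (intervalIntegrable_inv_one_sub hu.2)
      intervalIntegrable_const, integral_inv_one_sub hu.2, intervalIntegral.integral_const,
      smul_eq_mul, sub_zero, mul_comm]
  _ ≤ gfun α u := by
    refine intervalIntegral.integral_mono_on hu.1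
      ((intervalIntegrable_inv_one_sub hu.2).sub intervalIntegrable_const)
      (intervalIntegrable_rpow_div_one_sub (by linarith) hu.2) fun _ hv => ?_
    exact inv_one_sub_sub_le_rpow_div hα ⟨hv.1, hv.2.trans_lt hu.2⟩

lemma gfun_nonneg {u : ℝ} (hu : u ∈ Icc (0:ℝ) 1) : 0 ≤ gfun α u :=
  intervalIntegral.integral_nonneg hu.1 fun _ hv =>
    div_nonneg (rpow_nonneg hv.1 α) (sub_nonneg.2 (hv.2.trans hu.2))

lemma hasDerivAt_gfun (hα : 0 ≤ α) {u : ℝ} (hu : u < 1) :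
    HasDerivAt (gfun α) (u ^ α / (1 - u)) u :=
  intervalIntegral.integral_hasDerivAt_right (intervalIntegrable_rpow_div_one_sub hα hu)
    ((continuousOn_rpow_div_one_sub hα).stronglyMeasurableAtFilter isOpen_Iio u hu)
    ((continuousOn_rpow_div_one_sub hα).continuousAt (Iio_mem_nhds hu))

lemma continuousOn_gfun (hα : 0 ≤ α) : ContinuousOn (gfun α) (Iio 1) :=
  fun _ hu => (hasDerivAt_gfun hα hu).continuousAt.continuousWithinAt

end gfun

section Psi

variable {α x : ℝ}

lemma intervalIntegrable_one_sub_rpow (hx : 0 < x) :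
    IntervalIntegrable (fun u : ℝ => (1 - u) ^ (x - 1)) volume 0 1 := by
  simpa using ((intervalIntegral.intervalIntegrable_rpow' (a := 0) (b := 1)
    (by linarith : -1 < x - 1)).comp_sub_left 1).symm

lemma integral_one_sub_rpow (hx : 0 < x) : ∫ u in (0:ℝ)..1, (1 - u) ^ (x - 1) = x⁻¹ := by
  rw [intervalIntegral.integral_comp_sub_left (fun t => t ^ (x - 1)) 1,
    integral_rpow (Or.inl (by linarith))]
  simp [zero_rpow hx.ne']

lemma Psi_integrand_eq {u : ℝ} (hu : u < 1) :
    (1 - u)⁻¹ * exp (-x * gfun α u) = (1 - u) ^ (x - 1) * exp (x * (-log (1 - u) - gfun α u)) := by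
  have h1u : 0 < 1 - u := sub_pos.2 hu
  rw [show x * (-log (1 - u) - gfun α u) = -(log (1 - u) * x) + -x * gfun α u by ring, exp_add,
    exp_neg, ← rpow_def_of_pos h1u, rpow_sub_one h1u.ne']
  field_simp

lemma one_sub_rpow_le_Psi_integrand (hα : 0 ≤ α) (hx : 0 ≤ x) {u : ℝ} (hu : u ∈ Ico (0:ℝ) 1) :
    (1 - u) ^ (x - 1) ≤ (1 - u)⁻¹ * exp (-x * gfun α u) := by
  rw [Psi_integrand_eq hu.2]
  exact le_mul_of_one_le_right (rpow_nonneg (sub_nonneg.2 hu.2.le) _)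
    (one_le_exp (mul_nonneg hx (sub_nonneg.2 (gfun_le_neg_log hα hu))))

lemma Psi_integrand_le (hα : 1 ≤ α) (hx : 0 ≤ x) {u : ℝ} (hu : u ∈ Ico (0:ℝ) 1) :
    (1 - u)⁻¹ * exp (-x * gfun α u) ≤ exp (α * x) * (1 - u) ^ (x - 1) := by
  rw [Psi_integrand_eq hu.2, mul_comm (exp _)]
  have := neg_log_sub_le_gfun hα hu
  exact mul_le_mul_of_nonneg_left (exp_le_exp.2 (by nlinarith))
    (rpow_nonneg (sub_nonneg.2 hu.2.le) _)

lemma intervalIntegrable_Psi_integrand (hα : 1 ≤ α) (hx : 0 < x) :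
    IntervalIntegrable (fun u => (1 - u)⁻¹ * exp (-x * gfun α u)) volume 0 1 := by
  have hmaj := (intervalIntegrable_one_sub_rpow hx).const_mul (exp (α * x))
  rw [intervalIntegrable_iff_integrableOn_Ioo_of_le zero_le_one] at hmaj ⊢
  have hcont : ContinuousOn (fun u => (1 - u)⁻¹ * exp (-x * gfun α u)) (Iio 1) :=
    continuousOn_inv_one_sub.mul
      (continuous_exp.comp_continuousOn (continuousOn_const.mul (continuousOn_gfun (by linarith))))
  refine hmaj.mono' ((hcont.mono Ioo_subset_Iio_self).aestronglyMeasurable measurableSet_Ioo) ?_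
  refine (ae_restrict_iff' measurableSet_Ioo).2 (ae_of_all _ fun u hu => ?_)
  have h1u : 0 < 1 - u := sub_pos.2 hu.2
  rw [Real.norm_of_nonneg (by positivity)]
  exact Psi_integrand_le hα hx.le (Ioo_subset_Ico_self hu)

lemma inv_le_Psi (hα : 1 ≤ α) (hx : 0 < x) : x⁻¹ ≤ Psi α x := by
  rw [← integral_one_sub_rpow hx]
  exact intervalIntegral.integral_mono_on_of_le_Ioo zero_le_one (intervalIntegrable_one_sub_rpow hx)
    (intervalIntegrable_Psi_integrand hα hx) fun u hu =>
      one_sub_rpow_le_Psi_integrand (by linarith) hx.le (Ioo_subset_Ico_self hu)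

lemma Psi_le_exp_mul_inv (hα : 1 ≤ α) (hx : 0 < x) : Psi α x ≤ exp (α * x) * x⁻¹ := by
  rw [← integral_one_sub_rpow hx, ← intervalIntegral.integral_const_mul]
  exact intervalIntegral.integral_mono_on_of_le_Ioo zero_le_one
    (intervalIntegrable_Psi_integrand hα hx) ((intervalIntegrable_one_sub_rpow hx).const_mul _)
    fun u hu => Psi_integrand_le hα hx.le (Ioo_subset_Ico_self hu)

lemma antitoneOn_Psi (hα : 1 ≤ α) : AntitoneOn (Psi α) (Ioi 0) := fun y hy x hx hyx =>
  intervalIntegral.integral_mono_on_of_le_Ioo zero_le_one (intervalIntegrable_Psi_integrand hα hx)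
    (intervalIntegrable_Psi_integrand hα hy) fun u hu => by
      have h1u : 0 < 1 - u := sub_pos.2 hu.2
      have := gfun_nonneg (α := α) (Ioo_subset_Icc_self hu)
      gcongr

lemma tendsto_mul_Psi_nhdsGT_zero (hα : 1 ≤ α) :
    Tendsto (fun x => x * Psi α x) (𝓝[>] 0) (𝓝 1) := by
  have hexp : Tendsto (fun x => exp (α * x)) (𝓝[>] 0) (𝓝 1) :=
    ((continuous_const.mul continuous_id).rexp.tendsto' 0 1 (by simp)).mono_left
      nhdsWithin_le_nhds
  refine tendsto_of_tendsto_of_tendsto_of_le_of_le' tendsto_const_nhds hexp ?_ ?_ <;>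
    filter_upwards [self_mem_nhdsWithin] with x (hx : 0 < x)
  · calc 1 = x * x⁻¹ := (mul_inv_cancel₀ hx.ne').symm
      _ ≤ x * Psi α x := by gcongr; exact inv_le_Psi hα hx
  · calc x * Psi α x ≤ x * (exp (α * x) * x⁻¹) := by gcongr; exact Psi_le_exp_mul_inv hα hx
      _ = exp (α * x) := by field_simp

end Psi

lemma tendsto_nhdsGT_zero_of_antitoneOn {ι : Type*} {l : Filter ι} {f : ℝ → ℝ}
    (hf : AntitoneOn f (Ioi 0)) {X : ι → ℝ} (hX : ∀ᶠ i in l, 0 < X i)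
    (hfX : Tendsto (f ∘ X) l atTop) : Tendsto X l (𝓝[>] 0) := by
  refine tendsto_nhdsWithin_iff.2 ⟨tendsto_order.2 ⟨fun a ha => ?_, fun ε hε => ?_⟩, hX⟩
  · filter_upwards [hX] with i hi using ha.trans hi
  · filter_upwards [hX, hfX.eventually_gt_atTop (f ε)] with i hi hfi
    by_contra! hεX
    exact (hf hε hi hεX).not_gt hfi

/-- if, for every `β > 0`, `ρ(β)` is a positive real with
`β Ψ(ρ(β) β^α) = 1`, then `β^{α-1} ρ(β) → 1` as `β → 0⁺`, and in particular
`ρ(β) → ∞` as `β → 0⁺`. -/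
theorem rho_asymptotics_at_zero
    (α : ℝ) (hα : 1 < α) (ρ : ℝ → ℝ)
    (hρ : ∀ β : ℝ, 0 < β → 0 < ρ β ∧ β * Psi α (ρ β * β ^ α) = 1) :
    Tendsto (fun β => β ^ (α - 1) * ρ β) (nhdsWithin 0 (Set.Ioi 0)) (nhds 1) ∧
    Tendsto ρ (nhdsWithin 0 (Set.Ioi 0)) atTop := by
  set X : ℝ → ℝ := fun β => ρ β * β ^ α
  have hX_pos : ∀ᶠ β in 𝓝[>] (0:ℝ), 0 < X β := by
    filter_upwards [self_mem_nhdsWithin] with β (hβ : 0 < β)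
    exact mul_pos (hρ β hβ).1 (rpow_pos_of_pos hβ α)
  have hPsi_X : ∀ᶠ β in 𝓝[>] (0:ℝ), Psi α (X β) = β⁻¹ := by
    filter_upwards [self_mem_nhdsWithin] with β (hβ : 0 < β)
    exact eq_inv_of_mul_eq_one_right (hρ β hβ).2
  have hX : Tendsto X (𝓝[>] 0) (𝓝[>] 0) :=
    tendsto_nhdsGT_zero_of_antitoneOn (antitoneOn_Psi hα.le) hX_pos
      (tendsto_inv_nhdsGT_zero.congr' (hPsi_X.mono fun _ h => h.symm))
  have hlim : Tendsto (fun β => β ^ (α - 1) * ρ β) (𝓝[>] 0) (𝓝 1) := by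
    refine ((tendsto_mul_Psi_nhdsGT_zero hα.le).comp hX).congr' ?_
    filter_upwards [self_mem_nhdsWithin, hPsi_X] with β (hβ : 0 < β) hβX
    rw [Function.comp_apply, hβX, rpow_sub_one hβ.ne']
    field_simp
    ring
  refine ⟨hlim, ((tendsto_rpow_neg_nhdsGT_zero (by linarith : 1 - α < 0)).atTop_mul_pos one_pos
    hlim).congr' ?_⟩
  filter_upwards [self_mem_nhdsWithin] with β (hβ : 0 < β)
  rw [← mul_assoc, ← rpow_add hβ, sub_add_sub_cancel', sub_self, rpow_zero, one_mul]
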